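/- Let m be a fast sequence, g(i) = 2·(m°(i))^{i^i}, and p_i = m(i)^{−1/g(i)}. For each i let μ_i be the probability measure on graphs with vertex set {0,…,m(i)−1} (loops allowed) in which each unordered pair of vertices, including loops, is declared an edge independently with probability p_i. Then the μ_i-probability of the event 'there exists u ⊆ {0,…,m(i)−1} with |u| ≤ (m°(i))^{i^i} such that no vertex s is joined by an edge to every t ∈ u' tends to 0 as i → ∞. In particular, for all sufficiently large i there exists a symmetric graph E on {0,…,m(i)−1} in which every set u of at most (m°(i))^{i^i} vertices has a common neighbor. -/

import Mathlib

open MeasureTheory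
open scoped ENNReal

/-- `mCirc m i = ∏_{j<i} m j` (so `mCirc m 0 = 1`). -/
def mCirc (m : ℕ → ℕ) (i : ℕ) : ℕ := ∏ j ∈ Finset.range i, m j

/-- A *fast sequence* is `m : ℕ → ℕ` with `m 0 ≥ 2` and
`m i ≥ ((m°(i))^(i^i))^(4·(m°(i))^(i^i))` for all `i`. -/
def FastSeq (m : ℕ → ℕ) : Prop :=
  2 ≤ m 0 ∧ ∀ i, (mCirc m i ^ i ^ i) ^ (4 * mCirc m i ^ i ^ i) ≤ m i

/-- The Bernoulli measure on `Bool` giving `{true}` mass `p` and `{false}` mass `1 - p`. -/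
noncomputable def bernoulliBool (p : ℝ≥0∞) : Measure Bool :=
  p • Measure.dirac true + (1 - p) • Measure.dirac false

/-- A graph on `{0,…,n−1}` with loops allowed is identified with a function
`Sym2 (Fin n) → Bool` on unordered pairs (including singletons, i.e. loops);
`graphMeasure n p` is the product measure in which every unordered pair is an
edge independently with probability `p`. -/
noncomputable def graphMeasure (n : ℕ) (p : ℝ≥0∞) :
    Measure (Sym2 (Fin n) → Bool) :=
  Measure.pi fun _ => bernoulliBool p

/-- The edge probability `p_i = m(i)^{−1/g(i)}` where `g i = 2·(m°(i))^(i^i)`. -/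
noncomputable def pEdge (m : ℕ → ℕ) (i : ℕ) : ℝ≥0∞ :=
  (m i : ℝ≥0∞) ^ (-(1 : ℝ) / (2 * (mCirc m i : ℝ) ^ (i ^ i)))

/-- The bad event: there is a set `u` of at most `(m°(i))^(i^i)` vertices such that
no vertex `s` is joined by an edge to every `t ∈ u`. -/
def badEvent (m : ℕ → ℕ) (i : ℕ) : Set (Sym2 (Fin (m i)) → Bool) :=
  {E | ∃ u : Finset (Fin (m i)), u.card ≤ mCirc m i ^ i ^ i ∧
    ¬ ∃ s : Fin (m i), ∀ t ∈ u, E (Sym2.mk s t) = true}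

/-!
For a fixed set `u` of `k` vertices, the events "`s` is joined to every vertex of `u`", for
`s ∉ u`, depend on pairwise disjoint sets of edges, so `u` has no common neighbor with probability
at most `(1 - p^k)^(n-k)`. Every set of at most `K = (m°(i))^(i^i)` vertices lies in one of size
exactly `K`, so a union bound over those bounds the bad event by `n^K (1 - p^K)^(n-K)`, where
`n = m(i)` and `p^K = n^(-1/2)`. Cutting the exponent `n - K` into blocks of length `√n + 1`,
on each of which `1 - n^(-1/2)` has power at most `1/2` by Bernoulli's inequality, and using
`n ≥ K^(4K)`, the bound is at most `2^(-K) ≤ 2^(-i)`.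
-/

namespace MeasureTheory.Measure

variable {ι κ X : Type*} [Fintype ι] [Fintype κ] [MeasurableSpace X]

theorem pi_map_comp_of_injective (μ : ι → Measure X) [∀ i, IsProbabilityMeasure (μ i)]
    {f : κ → ι} (hf : f.Injective) :
    (Measure.pi μ).map (fun ω k ↦ ω (f k)) = Measure.pi fun k ↦ μ (f k) := by
  classical
  refine (pi_eq fun s hs ↦ ?_).symm
  have hpre : (fun ω k ↦ ω (f k)) ⁻¹' Set.univ.pi s =
      Set.univ.pi (Function.extend f s fun _ ↦ Set.univ) := by
    ext ω
    simp only [Set.mem_preimage, Set.mem_univ_pi]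
    refine ⟨fun h i ↦ ?_, fun h k ↦ by simpa [hf.extend_apply] using h (f k)⟩
    by_cases hi : ∃ k, f k = i
    · obtain ⟨k, rfl⟩ := hi
      simpa [hf.extend_apply] using h k
    · simp [Function.extend_apply' _ _ _ hi]
  rw [map_apply (by fun_prop) (.univ_pi hs), hpre, pi_pi,
    ← Finset.prod_subset (Finset.subset_univ (Finset.univ.image f)), Finset.prod_image hf.injOn]
  · simp [hf.extend_apply]
  · intro i _ hi
    rw [Function.extend_apply' _ _ _ (by simpa using hi), measure_univ]

theorem pi_map_curry {α β : Type*} [Fintype α] [Fintype β] (μ : α → β → Measure X)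
    [∀ a b, IsProbabilityMeasure (μ a b)] :
    (Measure.pi fun p : α × β ↦ μ p.1 p.2).map Function.curry =
      Measure.pi fun a ↦ Measure.pi fun b ↦ μ a b := by
  simpa only [infinitePi_eq_pi, MeasurableEquiv.coe_curry] using infinitePi_map_curry μ

theorem pi_setOf_forall_exists_notMem {α β : Type*} [Fintype α] [Fintype β] (μ : Measure X)
    [IsProbabilityMeasure μ] {f : α × β → ι} (hf : f.Injective) {T : Set X}
    (hT : MeasurableSet T) :
    Measure.pi (fun _ : ι ↦ μ) {ω | ∀ a, ∃ b, ω (f (a, b)) ∉ T} =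
      (1 - μ T ^ Fintype.card β) ^ Fintype.card α := by
  have hblocks : MeasurePreserving (fun ω a b ↦ ω (f (a, b))) (Measure.pi fun _ : ι ↦ μ)
      (Measure.pi fun _ : α ↦ Measure.pi fun _ : β ↦ μ) := by
    have hreindex : MeasurePreserving (fun ω k ↦ ω (f k)) (Measure.pi fun _ : ι ↦ μ)
        (Measure.pi fun _ : α × β ↦ μ) := ⟨by fun_prop, pi_map_comp_of_injective _ hf⟩
    have hcurry : MeasurePreserving Function.curry (Measure.pi fun _ : α × β ↦ μ)
        (Measure.pi fun _ : α ↦ Measure.pi fun _ : β ↦ μ) :=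
      ⟨(MeasurableEquiv.curry α β X).measurable, pi_map_curry fun _ _ ↦ μ⟩
    exact hcurry.comp hreindex
  have hset : {ω | ∀ a, ∃ b, ω (f (a, b)) ∉ T} = (fun (ω : ι → X) a b ↦ ω (f (a, b))) ⁻¹'
      Set.univ.pi fun _ ↦ (Set.univ.pi fun _ ↦ T)ᶜ := by
    ext ω
    simp
  have hT' : MeasurableSet (Set.univ.pi fun _ : β ↦ T) := .univ_pi fun _ ↦ hT
  rw [hset, hblocks.measure_preimage (MeasurableSet.univ_pi fun _ ↦ hT'.compl).nullMeasurableSet,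
    pi_pi, Finset.prod_const, Finset.card_univ, prob_compl_eq_one_sub hT', pi_pi,
    Finset.prod_const, Finset.card_univ]

end MeasureTheory.Measure

open Finset

def HasCommonNeighbor {n : ℕ} (E : Sym2 (Fin n) → Bool) (u : Finset (Fin n)) : Prop :=
  ∃ s, ∀ t ∈ u, E s(s, t) = true

theorem HasCommonNeighbor.mono {n : ℕ} {E : Sym2 (Fin n) → Bool} {u v : Finset (Fin n)}
    (h : HasCommonNeighbor E v) (huv : u ⊆ v) : HasCommonNeighbor E u :=
  let ⟨s, hs⟩ := h
  ⟨s, fun t ht ↦ hs t (huv ht)⟩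

theorem isProbabilityMeasure_bernoulliBool {p : ℝ≥0∞} (hp : p ≤ 1) :
    IsProbabilityMeasure (bernoulliBool p) :=
  ⟨by simp [bernoulliBool, add_tsub_cancel_of_le hp]⟩

theorem bernoulliBool_singleton_true (p : ℝ≥0∞) : bernoulliBool p {true} = p := by
  simp [bernoulliBool]

theorem isProbabilityMeasure_graphMeasure (n : ℕ) {p : ℝ≥0∞} (hp : p ≤ 1) :
    IsProbabilityMeasure (graphMeasure n p) := by
  have := isProbabilityMeasure_bernoulliBool hp
  unfold graphMeasure
  infer_instance

section graphMeasure

variable {n : ℕ} {p : ℝ≥0∞}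

theorem graphMeasure_no_common_neighbor_le (hp : p ≤ 1) (u : Finset (Fin n)) :
    graphMeasure n p {E | ¬ HasCommonNeighbor E u} ≤ (1 - p ^ #u) ^ (n - #u) := by
  have := isProbabilityMeasure_bernoulliBool hp
  let f : {s // s ∉ u} × u → Sym2 (Fin n) := fun st ↦ s(st.1, st.2)
  have hf : f.Injective := by
    rintro ⟨⟨s, hs⟩, ⟨t, ht⟩⟩ ⟨⟨s', hs'⟩, ⟨t', ht'⟩⟩ h
    rcases Sym2.eq_iff.1 h with ⟨rfl, rfl⟩ | ⟨rfl, -⟩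
    · rfl
    · exact absurd ht' hs
  calc graphMeasure n p {E | ¬ HasCommonNeighbor E u}
      ≤ graphMeasure n p {E | ∀ s, ∃ t, E (f (s, t)) ∉ ({true} : Set Bool)} := by
        refine measure_mono fun E hE ⟨s, hs⟩ ↦ ?_
        by_contra! h
        exact hE ⟨s, fun t ht ↦ h ⟨t, ht⟩⟩
    _ = (1 - p ^ #u) ^ (n - #u) := by
        rw [graphMeasure, Measure.pi_setOf_forall_exists_notMem _ hf (measurableSet_singleton _)]
        simp [bernoulliBool_singleton_true, Fintype.card_subtype_compl]

theorem graphMeasure_exists_small_no_common_neighbor_le (hp : p ≤ 1) {K : ℕ} (hK : K ≤ n) :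
    graphMeasure n p {E | ∃ u : Finset (Fin n), #u ≤ K ∧ ¬ HasCommonNeighbor E u} ≤
      n ^ K * (1 - p ^ K) ^ (n - K) := by
  calc graphMeasure n p {E | ∃ u : Finset (Fin n), #u ≤ K ∧ ¬ HasCommonNeighbor E u}
      ≤ graphMeasure n p
          (⋃ v ∈ powersetCard K univ, {E | ¬ HasCommonNeighbor E v}) := by
        refine measure_mono fun E ⟨u, hu, hE⟩ ↦ ?_
        obtain ⟨v, huv, hv⟩ := exists_superset_card_eq hu (by simpa using hK)
        simp only [Set.mem_iUnion, Set.mem_ofPred_eq, mem_powersetCard]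
        exact ⟨v, ⟨subset_univ v, hv⟩, fun h ↦ hE (h.mono huv)⟩
    _ ≤ ∑ v ∈ powersetCard K univ, graphMeasure n p {E | ¬ HasCommonNeighbor E v} :=
        measure_biUnion_finset_le _ _
    _ ≤ ∑ _v ∈ powersetCard K (univ : Finset (Fin n)), (1 - p ^ K) ^ (n - K) :=
        sum_le_sum fun v hv ↦ (mem_powersetCard.1 hv).2 ▸ graphMeasure_no_common_neighbor_le hp v
    _ ≤ n ^ K * (1 - p ^ K) ^ (n - K) := by
        rw [sum_const, card_powersetCard, card_univ, Fintype.card_fin, nsmul_eq_mul]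
        gcongr
        exact_mod_cast Nat.choose_le_pow n K

end graphMeasure

theorem Nat.le_two_pow_four_mul_sqrt_sqrt (n : ℕ) : n ≤ 2 ^ (4 * Nat.sqrt (Nat.sqrt n)) := by
  set s := Nat.sqrt n
  set q := Nat.sqrt s
  have hs : n < (s + 1) ^ 2 := Nat.lt_succ_sqrt' n
  have hq : s + 1 ≤ (q + 1) ^ 2 := Nat.lt_succ_sqrt' s
  have h2q : q + 1 ≤ 2 ^ q := Nat.lt_two_pow_self
  calc n ≤ (s + 1) ^ 2 := hs.le
    _ ≤ (((q + 1) ^ 2) ^ 2) := by gcongr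
    _ ≤ ((2 ^ q) ^ 2) ^ 2 := by gcongr
    _ = 2 ^ (4 * q) := by ring

theorem Nat.four_mul_sqrt_sqrt_mul_add_mul_sqrt_succ_le {n K : ℕ} (hK : 16 ≤ K)
    (hn : K ^ (4 * K) ≤ n) :
    (4 * Nat.sqrt (Nat.sqrt n) * K + K) * (Nat.sqrt n + 1) ≤ n - K := by
  set s := Nat.sqrt n
  set q := Nat.sqrt s
  have hKq : 16 * K ≤ q :=
    calc 16 * K ≤ K ^ 2 := by nlinarith
      _ ≤ K ^ K := Nat.pow_le_pow_right (by omega) (by omega)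
      _ ≤ q := by
        rw [Nat.le_sqrt, Nat.le_sqrt, ← pow_add, ← pow_add]
        convert hn using 2
        ring
  have hqs : q * q ≤ s := Nat.sqrt_le s
  have hsn : s * s ≤ n := Nat.sqrt_le n
  have : (4 * q * K + K) * (s + 1) + K ≤ n := by
    nlinarith [Nat.mul_le_mul_right (q * s) hKq, Nat.mul_le_mul_right s hqs]
  omega

theorem ENNReal.one_sub_pow_le_inv_two {x : ℝ≥0∞} {r : ℕ} (hx : x ≤ 1) (hrx : 1 ≤ r * x) :
    (1 - x) ^ r ≤ 2⁻¹ := by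
  have hbern : 2 ≤ (1 + x) ^ r :=
    calc (2 : ℝ≥0∞) = 1 + 1 := one_add_one_eq_two.symm
      _ ≤ 1 + r * x := by gcongr
      _ ≤ (1 + x) ^ r := one_add_mul_le_pow_of_sq_nonneg zero_le zero_le zero_le r
  have hconj : (1 - x) * (1 + x) ≤ 1 :=
    calc (1 - x) * (1 + x) = (1 - x) + (1 - x) * x := by ring
      _ ≤ (1 - x) + x := by gcongr; exact mul_le_of_le_one_left zero_le tsub_le_self
      _ = 1 := tsub_add_cancel_of_le hx
  calc (1 - x) ^ r ≤ ((1 + x) ^ r)⁻¹ :=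
        ENNReal.le_inv_iff_mul_le.2 (mul_pow (1 - x) (1 + x) r ▸ pow_le_one' hconj r)
    _ ≤ 2⁻¹ := ENNReal.inv_le_inv.2 hbern

theorem ENNReal.one_le_sqrt_succ_mul_rpow_neg_half (n : ℕ) :
    1 ≤ ((Nat.sqrt n + 1 : ℕ) : ℝ≥0∞) * (n : ℝ≥0∞) ^ (-(2⁻¹ : ℝ)) := by
  rw [ENNReal.rpow_neg, ← div_eq_mul_inv, ENNReal.le_div_iff_mul_le (by simp) (by simp), one_mul,
    ENNReal.rpow_inv_le_iff two_pos, ENNReal.rpow_two]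
  exact_mod_cast (Nat.lt_succ_sqrt' n).le

theorem ENNReal.pow_mul_one_sub_pow_le {n K : ℕ} {x : ℝ≥0∞} (hK : 16 ≤ K) (hn : K ^ (4 * K) ≤ n)
    (hx : x ≤ 1) (hsx : 1 ≤ ((Nat.sqrt n + 1 : ℕ) : ℝ≥0∞) * x) :
    (n : ℝ≥0∞) ^ K * (1 - x) ^ (n - K) ≤ 2⁻¹ ^ K := by
  set q := Nat.sqrt (Nat.sqrt n)
  have hn2 : (n : ℝ≥0∞) ≤ 2 ^ (4 * q) := by exact_mod_cast Nat.le_two_pow_four_mul_sqrt_sqrt n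
  calc (n : ℝ≥0∞) ^ K * (1 - x) ^ (n - K)
      ≤ (2 ^ (4 * q)) ^ K * ((1 - x) ^ (Nat.sqrt n + 1)) ^ (4 * q * K + K) := by
        rw [← pow_mul (1 - x), mul_comm (Nat.sqrt n + 1)]
        exact mul_le_mul' (pow_le_pow_left₀ zero_le hn2 K) <| pow_le_pow_of_le_one zero_le
          tsub_le_self (Nat.four_mul_sqrt_sqrt_mul_add_mul_sqrt_succ_le hK hn)
    _ ≤ (2 ^ (4 * q)) ^ K * 2⁻¹ ^ (4 * q * K + K) := by
        gcongr
        exact one_sub_pow_le_inv_two hx hsx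
    _ = 2⁻¹ ^ K := by
        rw [← pow_mul, pow_add, ← mul_assoc, ← mul_pow,
          ENNReal.mul_inv_cancel two_ne_zero ENNReal.ofNat_ne_top, one_pow, one_mul]

namespace FastSeq

variable {m : ℕ → ℕ}

theorem one_le (hm : FastSeq m) (i : ℕ) : 1 ≤ m i := by
  rcases Nat.eq_zero_or_pos (mCirc m i ^ i ^ i) with h0 | hpos
  · simpa [h0] using hm.2 i
  · exact (Nat.one_le_pow _ _ hpos).trans (hm.2 i)

theorem mCirc_pos (hm : FastSeq m) (i : ℕ) : 0 < mCirc m i :=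
  prod_pos fun j _ ↦ hm.one_le j

theorem two_le_mCirc (hm : FastSeq m) {i : ℕ} (hi : 1 ≤ i) : 2 ≤ mCirc m i :=
  hm.1.trans (single_le_prod' (fun j _ ↦ hm.one_le j) (mem_range.2 hi))

theorem pEdge_le_one (hm : FastSeq m) (i : ℕ) : pEdge m i ≤ 1 := by
  refine ENNReal.rpow_le_one_of_one_le_of_neg (by exact_mod_cast hm.one_le i) ?_
  have : (0 : ℝ) < mCirc m i := by exact_mod_cast hm.mCirc_pos i
  exact div_neg_of_neg_of_pos (by norm_num) (by positivity)

theorem pEdge_pow (hm : FastSeq m) (i : ℕ) :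
    pEdge m i ^ (mCirc m i ^ i ^ i) = (m i : ℝ≥0∞) ^ (-(2⁻¹ : ℝ)) := by
  have : (0 : ℝ) < mCirc m i := by exact_mod_cast hm.mCirc_pos i
  rw [pEdge, ← ENNReal.rpow_natCast, ← ENNReal.rpow_mul]
  congr 1
  push_cast
  field_simp

theorem measure_badEvent_le (hm : FastSeq m) {i : ℕ} (hi : 2 ≤ i) :
    graphMeasure (m i) (pEdge m i) (badEvent m i) ≤ 2⁻¹ ^ i := by
  set K := mCirc m i ^ i ^ i
  have hK : 2 ^ i ^ i ≤ K := Nat.pow_le_pow_left (hm.two_le_mCirc (by omega)) _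
  have hK16 : 16 ≤ K :=
    calc 16 = 2 ^ 2 ^ 2 := by norm_num
      _ ≤ 2 ^ i ^ i := Nat.pow_le_pow_right two_pos
          ((Nat.pow_le_pow_left hi 2).trans (Nat.pow_le_pow_right (by omega) hi))
      _ ≤ K := hK
  have hiK : i ≤ K :=
    calc i ≤ 2 ^ i := Nat.lt_two_pow_self.le
      _ ≤ 2 ^ i ^ i := Nat.pow_le_pow_right two_pos (Nat.le_self_pow (by omega) i)
      _ ≤ K := hK
  have hKn : K ≤ m i := (Nat.le_self_pow (by omega) K).trans (hm.2 i)
  calc graphMeasure (m i) (pEdge m i) (badEvent m i)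
      ≤ (m i : ℝ≥0∞) ^ K * (1 - pEdge m i ^ K) ^ (m i - K) :=
        graphMeasure_exists_small_no_common_neighbor_le (hm.pEdge_le_one i) hKn
    _ ≤ 2⁻¹ ^ K := by
        rw [hm.pEdge_pow i]
        exact ENNReal.pow_mul_one_sub_pow_le hK16 (hm.2 i)
          (ENNReal.rpow_le_one_of_one_le_of_neg (by exact_mod_cast hm.one_le i) (by norm_num))
          (ENNReal.one_le_sqrt_succ_mul_rpow_neg_half _)
    _ ≤ 2⁻¹ ^ i := pow_le_pow_right_of_le_one' (ENNReal.inv_le_one.2 one_le_two) hiK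

end FastSeq

/-- For a fast sequence `m`, the probability (under the random graph measure with
edge probability `p_i = m(i)^{−1/g(i)}`) that some set of at most `(m°(i))^(i^i)`
vertices has no common neighbor tends to `0` as `i → ∞`.  In particular, for all
sufficiently large `i` there is a (symmetric, loops-allowed) graph on `{0,…,m(i)−1}`
in which every set of at most `(m°(i))^(i^i)` vertices has a common neighbor. -/
theorem fastSeq_random_graph_small_sets_covered (m : ℕ → ℕ) (hm : FastSeq m) :
    Filter.Tendsto (fun i : ℕ => graphMeasure (m i) (pEdge m i) (badEvent m i))
      Filter.atTop (nhds 0) ∧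
    ∀ᶠ i : ℕ in Filter.atTop, ∃ E : Sym2 (Fin (m i)) → Bool,
      ∀ u : Finset (Fin (m i)), u.card ≤ mCirc m i ^ i ^ i →
        ∃ s : Fin (m i), ∀ t ∈ u, E (Sym2.mk s t) = true := by
  have hlim : Filter.Tendsto (fun i ↦ graphMeasure (m i) (pEdge m i) (badEvent m i))
      Filter.atTop (nhds 0) :=
    tendsto_of_tendsto_of_tendsto_of_le_of_le' tendsto_const_nhds
      (ENNReal.tendsto_pow_atTop_nhds_zero_of_lt_one (ENNReal.inv_lt_one.2 ENNReal.one_lt_two))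
      (.of_forall fun _ ↦ zero_le)
      (Filter.eventually_atTop.2 ⟨2, fun _ ↦ hm.measure_badEvent_le⟩)
  refine ⟨hlim, ?_⟩
  filter_upwards [hlim.eventually (eventually_lt_nhds zero_lt_one)] with i hi
  have := isProbabilityMeasure_graphMeasure (m i) (hm.pEdge_le_one i)
  obtain ⟨E, hE⟩ := (Set.ne_univ_iff_exists_notMem (badEvent m i)).1 fun h ↦ by
    rw [h, measure_univ] at hi
    exact hi.false
  exact ⟨E, fun u hu ↦ by_contra fun h ↦ hE ⟨u, hu, h⟩⟩
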